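/- For all nonnegative integers m and n, Σ_{k=0}^{m} (−1)^k k q^{binom(k+1,2)} [m+n+1 choose n+k+1]_q + Σ_{k=1}^{n+1} (−1)^{k−1} k q^{binom(k,2)} [m+n+1 choose n−k+1]_q = (q;q)_m (q;q)_n, as polynomials in q. -/

import Mathlib

/-!
With `N = m + n + 1`, the q-binomial theorem `∑ₖ (-1)ᵏ q^C(k,2) [N, k] xᵏ = ∏_{i<N} (1 - qⁱ x)`,
applied to `q⁻ⁿ x`, shows that the numbers `c_k = jacobiCoeff m n k` are the coefficients of the
polynomial `(-1)^(n+1) ∏_{j<n} (q^(j+1) - x) · ∏_{i≤m} (1 - qⁱ x)`, which has the factor `1 - x`.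
Hence `∑ c_k = 0`, and differentiating at `x = 1` gives `∑ k c_k = (q;q)_m (q;q)_n`. So
`∑ (k - n - 1) c_k = (q;q)_m (q;q)_n`; with the discrepancy `d = k - n - 1`, the terms with `d ≥ 0`
and with `d < 0` are the two sums of the statement.
-/

open Finset

/-- The q-shifted factorial `(q;q)_r = ∏_{i=1}^r (1 - q^i)` in `ℚ(q)`. -/
noncomputable def qPoch (r : ℕ) : RatFunc ℚ :=
  ∏ i ∈ Finset.range r, (1 - (RatFunc.X : RatFunc ℚ) ^ (i + 1))

/-- The Gaussian binomial coefficient `[a choose b]_q`, zero outside `0 ≤ b ≤ a`. -/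
noncomputable def qbinom (a : ℕ) (b : ℤ) : RatFunc ℚ :=
  if 0 ≤ b ∧ b ≤ (a : ℤ) then qPoch a / (qPoch b.toNat * qPoch (a - b.toNat)) else 0

open Polynomial

theorem sum_sub_mul_eq_neg_eval_one {R : Type*} [CommRing R] [IsDomain R] [Infinite R]
    (c : ℕ → R) (N : ℕ) (a : R) (g : R[X])
    (h : ∀ x, ∑ k ∈ range N, c k * x ^ k = g.eval x * (1 - x)) :
    ∑ k ∈ range N, ((k : R) - a) * c k = -g.eval 1 := by
  set P : R[X] := ∑ k ∈ range N, C (c k) * X ^ k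
  have hP : P = g * (1 - X) := funext fun x => by simp [P, eval_finsetSum, h]
  have h_sum : ∑ k ∈ range N, c k = 0 := by simpa using h 1
  have h_deriv : ∑ k ∈ range N, (k : R) * c k = -g.eval 1 := by
    have := congrArg (fun p => (derivative p).eval 1) hP
    simp only [P, derivative_sum, derivative_mul, derivative_C, derivative_X_pow, derivative_sub,
      derivative_one, derivative_X, eval_finsetSum, eval_add, eval_sub, eval_mul, eval_neg,
      eval_C, eval_natCast, eval_pow, eval_X, eval_one, map_natCast, one_pow, zero_mul, zero_add,
      zero_sub, mul_one, mul_neg, mul_zero, sub_self] at this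
    rw [← this]
    exact sum_congr rfl fun k _ => mul_comm _ _
  simp only [sub_mul, sum_sub_distrib, ← mul_sum, h_sum, h_deriv, mul_zero, sub_zero]

theorem prod_pow_succ_sub_pow_mul {R : Type*} [CommRing R] (a y : R) (n : ℕ) :
    ∏ j ∈ range n, (a ^ (j + 1) - a ^ n * y) =
      a ^ (n + 1).choose 2 * ∏ i ∈ range n, (1 - a ^ i * y) := by
  have h_exp : ∑ j ∈ range n, (j + 1) = (n + 1).choose 2 := by
    induction n with
    | zero => rfl
    | succ n ih =>
      rw [sum_range_succ, ih, Nat.choose_succ_succ' (n + 1), Nat.choose_one_right, add_comm]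
  rw [← h_exp, ← prod_pow_eq_pow_sum, ← prod_range_reflect (fun i => 1 - a ^ i * y),
    ← prod_mul_distrib]
  refine prod_congr rfl fun j hj => ?_
  rw [mem_range] at hj
  rw [mul_sub, mul_one, ← mul_assoc, ← pow_add, show j + 1 + (n - 1 - j) = n by omega]

local notation "q" => (RatFunc.X : RatFunc ℚ)

lemma one_sub_X_pow_ne_zero {i : ℕ} (hi : i ≠ 0) : 1 - q ^ i ≠ 0 := by
  rw [sub_ne_zero, ne_comm, ← RatFunc.algebraMap_X, ← map_pow, ← map_one (algebraMap ℚ[X] _),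
    (RatFunc.algebraMap_injective ℚ).ne_iff]
  intro h
  simpa [hi] using congrArg natDegree h

lemma qPoch_ne_zero (r : ℕ) : qPoch r ≠ 0 :=
  prod_ne_zero_iff.2 fun i _ => one_sub_X_pow_ne_zero i.succ_ne_zero

@[simp] lemma qPoch_zero : qPoch 0 = 1 :=
  prod_range_zero _

lemma qPoch_succ (r : ℕ) : qPoch (r + 1) = qPoch r * (1 - q ^ (r + 1)) :=
  prod_range_succ _ _

lemma prod_X_pow_succ_sub_one (n : ℕ) :
    ∏ j ∈ range n, (q ^ (j + 1) - 1) = (-1) ^ n * qPoch n := by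
  simp only [← neg_sub (1 : RatFunc ℚ), prod_neg, card_range, qPoch]

lemma qbinom_natCast {a b : ℕ} (h : b ≤ a) :
    qbinom a b = qPoch a / (qPoch b * qPoch (a - b)) := by
  simp [qbinom, h]

@[simp] lemma qbinom_zero_right (a : ℕ) : qbinom a 0 = 1 := by
  simpa [qPoch_ne_zero] using qbinom_natCast (Nat.zero_le a)

@[simp] lemma qbinom_self (a : ℕ) : qbinom a a = 1 := by
  simp [qbinom_natCast le_rfl, qPoch_ne_zero]

lemma qbinom_of_neg (a : ℕ) {b : ℤ} (h : b < 0) : qbinom a b = 0 := by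
  simp [qbinom]; omega

lemma qbinom_of_lt (a : ℕ) {b : ℤ} (h : a < b) : qbinom a b = 0 := by
  simp [qbinom]; omega

lemma qbinom_add_add_two (c d : ℕ) :
    qbinom (c + d + 2) ↑(d + 1) =
      qbinom (c + d + 1) ↑(d + 1) + q ^ (c + 1) * qbinom (c + d + 1) d := by
  rw [qbinom_natCast (by omega), qbinom_natCast (by omega), qbinom_natCast (by omega),
    show c + d + 2 - (d + 1) = c + 1 by omega, show c + d + 1 - (d + 1) = c by omega,
    show c + d + 1 - d = c + 1 by omega, qPoch_succ (c + d + 1), qPoch_succ d, qPoch_succ c]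
  have := qPoch_ne_zero c
  have := qPoch_ne_zero d
  have := one_sub_X_pow_ne_zero (i := c + 1) (by omega)
  have := one_sub_X_pow_ne_zero (i := d + 1) (by omega)
  field_simp
  ring

lemma qbinom_succ (a b : ℕ) :
    qbinom (a + 1) b = qbinom a b + q ^ (a + 1 - b) * qbinom a ((b : ℤ) - 1) := by
  rcases b with _ | d
  · simp [qbinom_of_neg]
  rcases lt_trichotomy d a with hd | rfl | hd
  · obtain ⟨c, rfl⟩ : ∃ c, a = c + d + 1 := ⟨a - d - 1, by omega⟩
    rw [show c + d + 1 + 1 - (d + 1) = c + 1 by omega, Nat.cast_succ, add_sub_cancel_right,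
      ← Nat.cast_succ]
    exact qbinom_add_add_two c d
  · simpa [qbinom_of_lt] using qbinom_self (d + 1)
  · rw [qbinom_of_lt _ (by omega), qbinom_of_lt _ (by omega), qbinom_of_lt _ (by omega)]
    ring

theorem sum_qbinom_mul_pow (N : ℕ) (x : RatFunc ℚ) :
    ∑ k ∈ range (N + 1), (-1) ^ k * q ^ k.choose 2 * qbinom N k * x ^ k =
      ∏ i ∈ range N, (1 - q ^ i * x) := by
  induction N with
  | zero => simp
  | succ N ih =>
    have h_same : ∑ k ∈ range (N + 2), (-1) ^ k * q ^ k.choose 2 * qbinom N k * x ^ k =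
        ∏ i ∈ range N, (1 - q ^ i * x) := by
      rw [sum_range_succ, qbinom_of_lt _ (by push_cast; omega), ih]
      ring
    have h_shift : ∑ k ∈ range (N + 2),
        (-1) ^ k * q ^ k.choose 2 * (q ^ (N + 1 - k) * qbinom N ((k : ℤ) - 1)) * x ^ k =
          -(q ^ N * x) * ∏ i ∈ range N, (1 - q ^ i * x) := by
      rw [sum_range_succ', qbinom_of_neg _ (by omega), ← ih, mul_sum]
      simp only [mul_zero, zero_mul, add_zero]
      refine sum_congr rfl fun j hj => ?_
      rw [mem_range] at hj
      have h_exp : q ^ (j + 1).choose 2 * q ^ (N - j) = q ^ j.choose 2 * q ^ N := by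
        have h_choose : (j + 1).choose 2 = j.choose 2 + j := by
          rw [Nat.choose_succ_succ', Nat.choose_one_right, add_comm]
        rw [← pow_add, ← pow_add, h_choose]
        congr 1
        omega
      push_cast
      rw [add_sub_cancel_right]
      linear_combination (-1) ^ (j + 1) * x ^ (j + 1) * qbinom N j * h_exp
    simp only [qbinom_succ, mul_add, add_mul, sum_add_distrib, h_same, h_shift, prod_range_succ]
    ring

/-- With `k = n + 1 + d`, the power of `q` is `q ^ (d * (d + 1) / 2)`, also for `d < 0`. -/
noncomputable def jacobiCoeff (m n k : ℕ) : RatFunc ℚ :=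
  (-1) ^ (n + 1 + k) * q ^ ((n + 1).choose 2 + k.choose 2) / q ^ (n * k) * qbinom (m + n + 1) k

theorem sum_jacobiCoeff_mul_pow (m n : ℕ) (x : RatFunc ℚ) :
    ∑ k ∈ range (m + n + 2), jacobiCoeff m n k * x ^ k =
      (-1) ^ (n + 1) * (∏ j ∈ range n, (q ^ (j + 1) - x)) *
        (∏ i ∈ range m, (1 - q ^ (i + 1) * x)) * (1 - x) := by
  obtain ⟨y, rfl⟩ : ∃ y, x = q ^ n * y := ⟨x / q ^ n, by field_simp [RatFunc.X_ne_zero]⟩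
  have h_term (k : ℕ) : jacobiCoeff m n k * (q ^ n * y) ^ k =
      (-1) ^ (n + 1) * q ^ (n + 1).choose 2 *
        ((-1) ^ k * q ^ k.choose 2 * qbinom (m + n + 1) k * y ^ k) := by
    rw [jacobiCoeff, mul_pow, ← pow_mul]
    field_simp [RatFunc.X_ne_zero]
    ring
  have h_shift (i : ℕ) : q ^ i * (q ^ n * y) = q ^ (n + i) * y := by ring
  simp only [h_term, ← mul_sum, h_shift]
  rw [sum_qbinom_mul_pow, show m + n + 1 = n + (m + 1) by ring, prod_range_add,
    prod_range_succ', prod_pow_succ_sub_pow_mul]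
  ring

theorem sum_sub_mul_jacobiCoeff (m n : ℕ) :
    ∑ k ∈ range (m + n + 2), ((k : RatFunc ℚ) - (n + 1)) * jacobiCoeff m n k =
      qPoch m * qPoch n := by
  rw [sum_sub_mul_eq_neg_eval_one _ _ _
    (C ((-1) ^ (n + 1)) * (∏ j ∈ range n, (C (q ^ (j + 1)) - X)) *
      ∏ i ∈ range m, (1 - C (q ^ (i + 1)) * X))
    fun x => by simp [eval_prod, sum_jacobiCoeff_mul_pow]]
  simp only [eval_mul, eval_C, eval_prod, eval_sub, eval_one, eval_X, mul_one,
    prod_X_pow_succ_sub_one, ← qPoch.eq_1]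
  linear_combination (qPoch m * qPoch n) * (even_two_mul n).neg_one_pow (α := RatFunc ℚ)

theorem jacobiCoeff_add (m n j : ℕ) :
    jacobiCoeff m n (n + 1 + j) =
      (-1) ^ j * q ^ (j + 1).choose 2 * qbinom (m + n + 1) (n + j + 1) := by
  have h_exp : (n + 1).choose 2 + (n + 1 + j).choose 2 = (j + 1).choose 2 + n * (n + 1 + j) := by
    qify [Nat.cast_choose_two]; ring
  rw [jacobiCoeff, h_exp, pow_add q, ← mul_assoc,
    mul_div_cancel_right₀ _ (pow_ne_zero _ RatFunc.X_ne_zero),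
    show n + 1 + (n + 1 + j) = j + 2 * (n + 1) by ring, pow_add, pow_mul,
    show ((n + 1 + j : ℕ) : ℤ) = n + j + 1 by push_cast; ring]
  simp

theorem jacobiCoeff_of_add_eq (m n d k : ℕ) (h : n + 1 = d + k) :
    jacobiCoeff m n d = (-1) ^ k * q ^ k.choose 2 * qbinom (m + n + 1) d := by
  have h_exp : (n + 1).choose 2 + d.choose 2 = k.choose 2 + n * d := by
    qify [Nat.cast_choose_two] at h ⊢
    linear_combination ((n + d + k : ℚ) / 2 - d) * h
  rw [jacobiCoeff, h_exp, pow_add q, ← mul_assoc,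
    mul_div_cancel_right₀ _ (pow_ne_zero _ RatFunc.X_ne_zero),
    show n + 1 + d = k + 2 * d by omega, pow_add, pow_mul]
  simp

theorem sum_sub_mul_jacobiCoeff_le (m n : ℕ) :
    ∑ k ∈ range (n + 1), ((k : RatFunc ℚ) - (n + 1)) * jacobiCoeff m n k =
      ∑ k ∈ Icc 1 (n + 1),
        (-1) ^ (k - 1) * (k : RatFunc ℚ) * q ^ (k * (k - 1) / 2) *
          qbinom (m + n + 1) ((n : ℤ) - k + 1) := by
  symm
  refine sum_nbij' (n + 1 - ·) (n + 1 - ·) (by grind) (by grind) (by grind) (by grind)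
    fun k hk => ?_
  obtain ⟨i, rfl⟩ := Nat.exists_eq_add_of_le' (mem_Icc.1 hk).1
  have hi : i ≤ n := by grind
  simp only [Nat.add_sub_cancel, Nat.add_sub_add_right]
  rw [jacobiCoeff_of_add_eq m n (n - i) (i + 1) (by omega), Nat.choose_two_right,
    Nat.add_sub_cancel, show (n : ℤ) - ↑(i + 1) + 1 = ↑(n - i) by omega]
  push_cast [Nat.cast_sub hi]
  ring

theorem sum_sub_mul_jacobiCoeff_gt (m n : ℕ) :
    ∑ j ∈ range (m + 1),
        (((n + 1 + j : ℕ) : RatFunc ℚ) - (n + 1)) * jacobiCoeff m n (n + 1 + j) =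
      ∑ k ∈ range (m + 1),
        (-1) ^ k * (k : RatFunc ℚ) * q ^ (k * (k + 1) / 2) *
          qbinom (m + n + 1) ((n : ℤ) + k + 1) := by
  refine sum_congr rfl fun j _ => ?_
  rw [jacobiCoeff_add, Nat.choose_two_right, Nat.add_sub_cancel, mul_comm (j + 1)]
  push_cast
  ring

/-- The finite form of Jacobi's identity, split into nonnegative and negative
discrepancy parts (Section 3):
`Σ_{k=0}^{m} (-1)^k k q^{C(k+1,2)} [m+n+1, n+k+1]_q
 + Σ_{k=1}^{n+1} (-1)^{k-1} k q^{C(k,2)} [m+n+1, n-k+1]_q = (q;q)_m (q;q)_n`. -/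
theorem finite_jacobi_split (m n : ℕ) :
    (∑ k ∈ Finset.range (m + 1),
        (-1 : RatFunc ℚ) ^ k * (k : RatFunc ℚ) *
          (RatFunc.X : RatFunc ℚ) ^ (k * (k + 1) / 2) *
            qbinom (m + n + 1) ((n : ℤ) + k + 1)) +
      (∑ k ∈ Finset.Icc 1 (n + 1),
        (-1 : RatFunc ℚ) ^ (k - 1) * (k : RatFunc ℚ) *
          (RatFunc.X : RatFunc ℚ) ^ (k * (k - 1) / 2) *
            qbinom (m + n + 1) ((n : ℤ) - k + 1)) =
      qPoch m * qPoch n := by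
  rw [← sum_sub_mul_jacobiCoeff m n, show m + n + 2 = (n + 1) + (m + 1) by ring,
    sum_range_add _ (n + 1) (m + 1), sum_sub_mul_jacobiCoeff_le, sum_sub_mul_jacobiCoeff_gt,
    add_comm]
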